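/- arXiv:2605.04959 — 11 statements merged into one kernel-verified Lean document; each statement's English description precedes it below -/
import Mathlib

section
/- The box product of digraphs, together with the box hom, makes the category of digraphs a closed monoidal category: there is a natural bijection Hom(G ⊗ H, K) ≅ Hom(G, Hom^⊗(H, K)). -/
/-- A digraph map between digraphs presented by their edge relations. -/
def IsDMapRel {V W : Type} (GE : V → V → Prop) (HE : W → W → Prop) (f : V → W) : Prop :=
  ∀ a b, GE a b → HE (f a) (f b)

/-- Edge relation of the box product `G ⊗ H`: an arrow `(g,h) → (g',h')` iff
(`g → g'` in `G` and `h = h'`) or (`h → h'` in `H` and `g = g'`). -/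
def boxE {V W : Type} (GE : V → V → Prop) (HE : W → W → Prop) :
    V × W → V × W → Prop :=
  fun p q => (GE p.1 q.1 ∧ p.2 = q.2) ∨ (HE p.2 q.2 ∧ p.1 = q.1)

/-- Edge relation of the box hom `Hom^⊗(H, K)`: vertices are digraph maps `H → K`,
with an arrow `φ → ψ` iff for every `w` there is an arrow `φ(w) → ψ(w)` in `K`. -/
def boxHomE {W X : Type} (HE : W → W → Prop) (KE : X → X → Prop) :
    {f : W → X // IsDMapRel HE KE f} → {f : W → X // IsDMapRel HE KE f} → Prop :=
  fun φ ψ => ∀ w, KE (φ.1 w) (ψ.1 w)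

/-- The box product and box hom make digraphs a closed monoidal category: currying
gives a natural bijection `Hom(G ⊗ H, K) ≅ Hom(G, Hom^⊗(H, K))`. -/
theorem box_product_closed_monoidal {V W X : Type}
    (GE : V → V → Prop) (hG : ∀ v, GE v v)
    (HE : W → W → Prop) (hH : ∀ w, HE w w)
    (KE : X → X → Prop) (hK : ∀ x, KE x x) :
    ∃ e : {F : V × W → X // IsDMapRel (boxE GE HE) KE F} ≃
        {F : V → {f : W → X // IsDMapRel HE KE f} // IsDMapRel GE (boxHomE HE KE) F},
      ∀ F g h, (((e F).1 g).1 h) = F.1 (g, h) := by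
  refine ⟨{
    toFun := fun F => ⟨fun v => ⟨fun w => F.1 (v, w),
      fun a b hab => F.2 (v, a) (v, b) (Or.inr ⟨hab, rfl⟩)⟩,
      fun a b hab w => F.2 (a, w) (b, w) (Or.inl ⟨hab, rfl⟩)⟩
    invFun := fun F => ⟨fun p => (F.1 p.1).1 p.2, by
      rintro ⟨a, c⟩ ⟨b, d⟩ (⟨h, rfl⟩ | ⟨h, rfl⟩)
      · exact F.2 a b h c
      · exact (F.1 a).2 c d h⟩
    left_inv := fun F => rfl
    right_inv := fun F => rfl }, fun F g h => rfl⟩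
end

section
/- Let H ⊆ G be an induced subdigraph, φ : H → H' a digraph map, and G' = G ⊔_H H' the pushout in digraphs. Then G' can be described explicitly: V(G') = (V(G) ∖ V(H)) ∪ V(H'), the map φ' : G → G' sends g ∈ V(G)∖V(H) to g and h ∈ V(H) to φ(h), and E(G') = (φ'×φ')(E(G)) ∪ E(H'). Moreover the induced subdigraph G' ∖ H' is isomorphic to G ∖ H. -/
open Classical in
/-- Vertex map `φ' : V(G) → V(G')` of the pushout `G' = G ⊔_H H'` along the inclusion
of the induced subdigraph on the vertex set `S`: `g ↦ g` for `g ∉ S` and `h ↦ φ(h)`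
for `h ∈ S`. The vertex set of `G'` is `(V(G) ∖ S) ⊕ V(H')`. -/
noncomputable def pushVert {V W : Type} (S : Set V) (φ : V → W) (v : V) :
    {v : V // v ∉ S} ⊕ W :=
  if h : v ∈ S then Sum.inr (φ v) else Sum.inl ⟨v, h⟩

/-- Edge relation of the pushout `G' = G ⊔_H H'`:
`E(G') = (φ' × φ')(E(G)) ∪ E(H')`. -/
def pushEdge {V W : Type} (GE : V → V → Prop) (S : Set V) (HE' : W → W → Prop)
    (φ : V → W) : ({v : V // v ∉ S} ⊕ W) → ({v : V // v ∉ S} ⊕ W) → Prop :=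
  fun x y =>
    (∃ a b, GE a b ∧ pushVert S φ a = x ∧ pushVert S φ b = y) ∨
    (∃ w w', HE' w w' ∧ x = Sum.inr w ∧ y = Sum.inr w')

/-- Let `H ⊆ G` be the induced subdigraph on a vertex set `S`, `φ : H → H'` a digraph
map, and `G'` the digraph described explicitly by `V(G') = (V(G) ∖ S) ⊕ V(H')`,
`E(G') = (φ'×φ')(E(G)) ∪ E(H')`. Then `G'`, with the maps `φ' : G → G'` and
`inr : H' → G'`, is the pushout `G ⊔_H H'` in digraphs, and the induced subdigraph
`G' ∖ H'` is isomorphic to `G ∖ H` (via `inl`). -/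
theorem pushout_along_induced_inclusion {V W : Type}
    (GE : V → V → Prop) (hG : ∀ v, GE v v)
    (S : Set V)
    (HE' : W → W → Prop) (hH' : ∀ w, HE' w w)
    (φ : V → W)
    (hφ : ∀ a ∈ S, ∀ b ∈ S, GE a b → HE' (φ a) (φ b)) :
    -- universal property of the pushout
    (∀ (K : Type) (KE : K → K → Prop) (α : V → K) (β : W → K),
        (∀ a b, GE a b → KE (α a) (α b)) →
        (∀ w w', HE' w w' → KE (β w) (β w')) →
        (∀ h ∈ S, α h = β (φ h)) →
        ∃! γ : ({v : V // v ∉ S} ⊕ W) → K,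
          (∀ x y, pushEdge GE S HE' φ x y → KE (γ x) (γ y)) ∧
          (∀ v, γ (pushVert S φ v) = α v) ∧
          (∀ w, γ (Sum.inr w) = β w)) ∧
    -- `G' ∖ H' ≅ G ∖ H`
    (∀ a b : {v : V // v ∉ S},
        pushEdge GE S HE' φ (Sum.inl a) (Sum.inl b) ↔ GE a.1 b.1) := by
  constructor
  · intro K KE α β hα hβ hcomm
    refine ⟨fun x => Sum.rec (fun v => α v.1) β x, ⟨?_, ?_, fun w => rfl⟩, ?_⟩
    · have key : ∀ v, (Sum.rec (fun v : {v : V // v ∉ S} => α v.1) β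
          (pushVert S φ v) : K) = α v := by
        intro v
        unfold pushVert
        by_cases h : v ∈ S
        · simp [h, (hcomm v h).symm]
        · simp [h]
      rintro x y (⟨a, b, hab, rfl, rfl⟩ | ⟨w, w', hww, rfl, rfl⟩)
      · simp only []; rw [key, key]; exact hα a b hab
      · exact hβ w w' hww
    · intro v
      unfold pushVert
      by_cases h : v ∈ S
      · simp [h, (hcomm v h).symm]
      · simp [h]
    · rintro γ ⟨-, h2, h3⟩
      funext x
      rcases x with ⟨v, hv⟩ | w
      · have := h2 v
        rwa [pushVert, dif_neg hv] at this
      · exact h3 w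
  · intro a b
    constructor
    · rintro (⟨x, y, hxy, hx, hy⟩ | ⟨w, w', -, h, -⟩)
      · rw [pushVert] at hx hy
        by_cases h1 : x ∈ S
        · rw [dif_pos h1] at hx; cases hx
        by_cases h2 : y ∈ S
        · rw [dif_pos h2] at hy; cases hy
        rw [dif_neg h1] at hx
        rw [dif_neg h2] at hy
        obtain rfl : (⟨x, h1⟩ : {v : V // v ∉ S}) = a := Sum.inl.inj hx
        obtain rfl : (⟨y, h2⟩ : {v : V // v ∉ S}) = b := Sum.inl.inj hy
        exact hxy
      · cases h
    · intro h
      exact Or.inl ⟨a.1, b.1, h, by rw [pushVert, dif_neg a.2], by rw [pushVert, dif_neg b.2]⟩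
end

section
/- Induced inclusions of digraphs are stable under pushouts: if H ⊆ G is an induced subdigraph and φ : H → H' is any digraph map, then in the pushout G' = G ⊔_H H' the map H' → G' is an induced inclusion. -/
/-- Induced inclusions are stable under pushouts: if `H ⊆ G` is the induced subdigraph
on a vertex set `S` and `φ : H → H'` is a digraph map, then in the pushout
`G' = G ⊔_H H'` the canonical map `H' → G'` is injective and its image is an induced
subdigraph: every arrow of `G'` between vertices coming from `H'` is an arrow of `H'`. -/
theorem induced_inclusion_pushout_stable {V W : Type}
    (GE : V → V → Prop) (hG : ∀ v, GE v v)
    (S : Set V)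
    (HE' : W → W → Prop) (hH' : ∀ w, HE' w w)
    (φ : V → W)
    (hφ : ∀ a ∈ S, ∀ b ∈ S, GE a b → HE' (φ a) (φ b)) :
    Function.Injective (fun w : W => (Sum.inr w : {v : V // v ∉ S} ⊕ W)) ∧
    (∀ w w' : W, pushEdge GE S HE' φ (Sum.inr w) (Sum.inr w') → HE' w w') := by
  constructor
  · intro a b h; simpa using h
  · intro w w' h
    rcases h with ⟨a, b, hab, ha, hb⟩ | ⟨x, y, hxy, hx, hy⟩
    · unfold pushVert at ha hb
      split_ifs at ha hb with h1 h2
      · simp only [Sum.inr.injEq] at ha hb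
        subst ha; subst hb; exact hφ a h1 b h2 hab
    · obtain rfl : w = x := by simpa using hx
      obtain rfl : w' = y := by simpa using hy
      exact hxy
end

section
/- In-closed inclusions of digraphs are stable under pushouts: if H ⊆ G is an in-closed subdigraph and φ : H → H' is any digraph map, then in the pushout G' = G ⊔_H H' the image of H' in G' is an in-closed subdigraph. -/
/-- In-closed inclusions are stable under pushouts: if `H ⊆ G` is the in-closed
induced subdigraph on a vertex set `S` (every arrow of `G` with target in `S` has
source in `S`) and `φ : H → H'` is a digraph map, then in the pushout
`G' = G ⊔_H H'` the image of `H'` is in-closed: every arrow of `G'` with target in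
the image of `H'` has its source in the image of `H'`. -/
theorem inClosed_inclusion_pushout_stable {V W : Type}
    (GE : V → V → Prop) (hG : ∀ v, GE v v)
    (S : Set V)
    (hin : ∀ a b, GE a b → b ∈ S → a ∈ S)
    (HE' : W → W → Prop) (hH' : ∀ w, HE' w w)
    (φ : V → W)
    (hφ : ∀ a ∈ S, ∀ b ∈ S, GE a b → HE' (φ a) (φ b)) :
    ∀ (x : {v : V // v ∉ S} ⊕ W) (w : W),
      pushEdge GE S HE' φ x (Sum.inr w) → ∃ w', x = Sum.inr w' := by
  intro x w h
  rcases h with ⟨a, b, hab, hax, hbw⟩ | ⟨w₁, w₂, _, hx, _⟩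
  · have hb : b ∈ S := by
      by_contra hb
      simp [pushVert, hb] at hbw
    have ha : a ∈ S := hin a b hab hb
    exact ⟨φ a, by simp [pushVert, ha] at hax; exact hax.symm⟩
  · exact ⟨w₁, hx⟩
end

section
/- Directed deformation retracts are closed under retracts: if H ⊆ G is a directed deformation retract, G' ⊆ G and H' ⊆ G' ∩ H are subdigraphs, and r : G → G' is a retraction with r(H) ⊆ H', then H' ⊆ G' is a directed deformation retract, witnessed by η' = r ∘ η|_{G'}. -/
/-!
A retraction `r : G → G'` is a digraph map fixing `G'`, so it does not lengthen paths and
distances between vertices of `G'` are the same in `G'` as in `G`. For `g ∈ G' ∖ H'` and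
`h ∈ H'`, the arrow `r (η g) → g` gives `dist(h, g) ≤ dist(h, r (η g)) + 1`, and since `r`
fixes `h`, `dist(h, r (η g)) + 1 ≤ dist(h, η g) + 1 = dist(h, g)`.
-/

/-- There is a directed path of length `n` from `a` to `b` (steps may be degenerate
arrows, i.e. loops). -/
def PathLen {V : Type} (E : V → V → Prop) (a b : V) (n : ℕ) : Prop :=
  ∃ f : ℕ → V, f 0 = a ∧ f n = b ∧ ∀ i < n, E (f i) (f (i + 1))

/-- The directed distance `dist(a,b) ∈ ℕ ∪ {∞}`. -/
noncomputable def ddist {V : Type} (E : V → V → Prop) (a b : V) : ℕ∞ :=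
  sInf {n : ℕ∞ | ∃ m : ℕ, n = (m : ℕ∞) ∧ PathLen E a b m}

/-- `S` is a directed deformation retract of the digraph with vertex set `D` and
edge relation `E`, witnessed by `η`: `S` is an in-closed subdigraph, `η` is a digraph
map of the digraph into itself, with (DDR1) an arrow `η(g) → g` for every vertex,
(DDR2) `η` fixes `S`, and (DDR3) `dist(h,g) = dist(h,η(g)) + 1` for `g ∈ D ∖ S`,
`h ∈ S`, the distance being the directed path distance of the digraph `(D, E)`. -/
def IsDDRon {V : Type} (D : Set V) (E : V → V → Prop) (S : Set V) (η : V → V) : Prop :=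
  S ⊆ D ∧
  (∀ a ∈ D, ∀ b ∈ D, E a b → b ∈ S → a ∈ S) ∧
  (∀ g ∈ D, η g ∈ D) ∧
  (∀ a ∈ D, ∀ b ∈ D, E a b → E (η a) (η b)) ∧
  (∀ g ∈ D, E (η g) g) ∧
  (∀ h ∈ S, η h = h) ∧
  (∀ g ∈ D, g ∉ S → ∀ h ∈ S, ddist E h g = ddist E h (η g) + 1)

section

variable {V : Type} {E E' : V → V → Prop} {a b c : V} {m : ℕ}

theorem PathLen.map {φ : V → V} (hφ : ∀ x y, E x y → E' (φ x) (φ y)) (h : PathLen E a b m) :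
    PathLen E' (φ a) (φ b) m := by
  obtain ⟨f, hf0, hfm, hstep⟩ := h
  exact ⟨φ ∘ f, by simp [hf0], by simp [hfm], fun i hi => hφ _ _ (hstep i hi)⟩

theorem PathLen.snoc (h : PathLen E a b m) (hbc : E b c) : PathLen E a c (m + 1) := by
  obtain ⟨f, hf0, hfm, hstep⟩ := h
  refine ⟨fun i => if i ≤ m then f i else c, by simp [hf0], by simp, fun i hi => ?_⟩
  rcases Nat.lt_or_eq_of_le (Nat.lt_succ_iff.mp hi) with hlt | rfl
  · simpa [hlt.le, Nat.succ_le_of_lt hlt] using hstep i hlt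
  · simpa [hfm] using hbc

theorem ddist_le_of_pathLen (h : PathLen E a b m) : ddist E a b ≤ m :=
  sInf_le ⟨m, rfl, h⟩

theorem ddist_map_le {φ : V → V} (hφ : ∀ x y, E x y → E' (φ x) (φ y)) (a b : V) :
    ddist E' (φ a) (φ b) ≤ ddist E a b := by
  refine le_sInf ?_
  rintro _ ⟨m, rfl, hm⟩
  exact ddist_le_of_pathLen (hm.map hφ)

theorem ddist_le_ddist_add_one (hbc : E b c) : ddist E a c ≤ ddist E a b + 1 := by
  conv_rhs => rw [ddist, ENat.sInf_add]
  refine le_iInf₂ ?_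
  rintro _ ⟨m, rfl, hm⟩
  exact_mod_cast ddist_le_of_pathLen (hm.snoc hbc)

theorem ddist_eq_of_retraction {T : Set V} {r : V → V} (hsub : ∀ x y, E' x y → E x y)
    (hr : ∀ x y, E x y → E' (r x) (r y)) (hrid : ∀ v ∈ T, r v = v) (ha : a ∈ T) (hb : b ∈ T) :
    ddist E' a b = ddist E a b := by
  refine le_antisymm ?_ (ddist_map_le (φ := id) hsub a b)
  simpa only [hrid a ha, hrid b hb] using ddist_map_le hr a b

end

theorem ddr_closed_under_retracts_general {V : Type}
    (GE : V → V → Prop) (hG : ∀ v, GE v v)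
    (S : Set V) (η : V → V)
    (hDDR : IsDDRon Set.univ GE S η)
    (T : Set V) (E' : V → V → Prop)
    (hE'sub : ∀ a b, E' a b → GE a b ∧ a ∈ T ∧ b ∈ T)
    (S' : Set V) (hS' : S' ⊆ T ∩ S)
    (r : V → V)
    (hr : ∀ a b, GE a b → E' (r a) (r b))
    (hrid : ∀ v ∈ T, r v = v)
    (hrS : ∀ h ∈ S, r h ∈ S') :
    IsDDRon T E' S' (fun v => r (η v)) := by
  obtain ⟨-, hIn, -, hMap, hD1, hD2, hD3⟩ := hDDR
  have hsub : ∀ a b, E' a b → GE a b := fun a b hab => (hE'sub a b hab).1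
  have hrT : ∀ v, r v ∈ T := fun v => (hE'sub _ _ (hr v v (hG v))).2.1
  have hD1' : ∀ g ∈ T, E' (r (η g)) g := fun g hg => by
    simpa only [hrid g hg] using hr _ _ (hD1 g trivial)
  refine ⟨fun x hx => (hS' hx).1, ?inClosed, fun g _ => hrT (η g),
    fun a _ b _ hab => hr _ _ (hMap a trivial b trivial (hsub a b hab)), hD1', ?fix, ?dist⟩
  case inClosed =>
    intro a ha b _ hab hb
    simpa only [hrid a ha] using hrS a (hIn a trivial b trivial (hsub a b hab) (hS' hb).2)
  case fix =>
    intro h hh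
    simp only [hD2 h (hS' hh).2, hrid h (hS' hh).1]
  case dist =>
    intro g hg hgS' h hh
    have hgS : g ∉ S := fun hgS => hgS' (hrid g hg ▸ hrS g hgS)
    have hshorter : ddist E' h (r (η g)) ≤ ddist GE h (η g) := by
      simpa only [hrid h (hS' hh).1] using ddist_map_le hr h (η g)
    refine le_antisymm (ddist_le_ddist_add_one (hD1' g hg)) ?_
    calc ddist E' h (r (η g)) + 1
        ≤ ddist GE h (η g) + 1 := by gcongr
      _ = ddist GE h g := (hD3 g trivial hgS h (hS' hh).2).symm
      _ = ddist E' h g := (ddist_eq_of_retraction hsub hr hrid (hS' hh).1 hg).symm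

/-- Directed deformation retracts are closed under retracts: if `H ⊆ G` is a directed
deformation retract (vertex set `S`, witness `η`), `G' ⊆ G` is a subdigraph (vertex
set `T`, edge relation `E'` contained in that of `G`), `S' ⊆ T ∩ S`, and `r : G → G'`
is a retraction with `r(S) ⊆ S'`, then `H' ⊆ G'` is a directed deformation retract,
witnessed by `η' = r ∘ η`. -/
theorem ddr_closed_under_retracts {V : Type}
    (GE : V → V → Prop) (hG : ∀ v, GE v v)
    (S : Set V) (η : V → V)
    (hDDR : IsDDRon Set.univ GE S η)
    (T : Set V) (E' : V → V → Prop)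
    (hE'sub : ∀ a b, E' a b → GE a b ∧ a ∈ T ∧ b ∈ T)
    (hE'refl : ∀ v ∈ T, E' v v)
    (S' : Set V) (hS' : S' ⊆ T ∩ S)
    (r : V → V)
    (hr : ∀ a b, GE a b → E' (r a) (r b))
    (hrid : ∀ v ∈ T, r v = v)
    (hrS : ∀ h ∈ S, r h ∈ S') :
    IsDDRon T E' S' (fun v => r (η v)) :=
  ddr_closed_under_retracts_general GE hG S η hDDR T E' hE'sub S' hS' r hr hrid hrS
end

section
/- Let p : G → H be a 2-covering of digraphs. Then p satisfies the unique right lifting property with respect to any inclusion of digraphs A ⊆ B satisfying: (1) for every b ∈ B there is a ∈ A with an arrow a → b in B; (2) for every b ∈ B and a, a' ∈ A with arrows a → b and a' → b, there is a'' ∈ A with arrows a'' → a and a'' → a' in A; (3) for every arrow b → b' in B there is an arrow a → a' in A with arrows a → b and a' → b' in B. -/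
/-- Edge relation of `D_k(G)`: an arrow `a → b` iff there is a directed path of
length at most `k` from `a` to `b`. -/
def DkE {V : Type} (E : V → V → Prop) (k : ℕ) (a b : V) : Prop :=
  ∃ n ≤ k, PathLen E a b n

/-- `p` is a 1-covering from the digraph `(V, GE)` to `(W, HE)`: unique lifting of
arrows at both endpoints. -/
def IsOneCov {V W : Type} (GE : V → V → Prop) (HE : W → W → Prop) (p : V → W) : Prop :=
  (∀ g h', HE (p g) h' → ∃! g', GE g g' ∧ p g' = h') ∧
  (∀ g h', HE h' (p g) → ∃! g', GE g' g ∧ p g' = h')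

/-- `p` is an `ℓ`-covering: `D_k(p)` is a 1-covering for all `1 ≤ k ≤ ℓ`. -/
def IsLCov {V W : Type} (GE : V → V → Prop) (HE : W → W → Prop) (p : V → W)
    (l : ℕ) : Prop :=
  ∀ k, 1 ≤ k → k ≤ l → IsOneCov (DkE GE k) (DkE HE k) p

lemma pathLen_one {V : Type} {E : V → V → Prop} {a b : V} (h : E a b) :
    PathLen E a b 1 := by
  refine ⟨fun i => if i = 0 then a else b, by simp, by simp, ?_⟩
  intro i hi
  have hi0 : i = 0 := by omega
  simp [hi0, h]

lemma dk_of_edge {V : Type} {E : V → V → Prop} {a b : V} {k : ℕ} (hk : 1 ≤ k)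
    (h : E a b) : DkE E k a b := ⟨1, hk, pathLen_one h⟩

lemma dk2_of_chain {V : Type} {E : V → V → Prop} {a c b : V} (h1 : E a c) (h2 : E c b) :
    DkE E 2 a b := by
  refine ⟨2, le_refl _, fun i => if i = 0 then a else if i = 1 then c else b,
    by simp, by simp, ?_⟩
  intro i hi
  interval_cases i <;> simp [h1, h2]

lemma edge_of_dk1 {V : Type} {E : V → V → Prop} (hrefl : ∀ v, E v v) {a b : V}
    (h : DkE E 1 a b) : E a b := by
  obtain ⟨n, hn, f, h0, hn', hstep⟩ := h
  interval_cases n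
  · rw [← hn', ← h0]; exact hrefl _
  · have := hstep 0 (by norm_num)
    rwa [h0, hn'] at this

/-- Any 2-covering `p : G → H` has the unique right lifting property with respect to
any inclusion of digraphs `A ⊆ B` (A with vertex set `SA` and edge relation `EA`,
not necessarily induced) satisfying the three conditions:
(1) every vertex of `B` receives an arrow from a vertex of `A`;
(2) two `A`-vertices with arrows to the same `B`-vertex receive arrows in `A` from a
common `A`-vertex;
(3) every arrow of `B` is covered by an arrow of `A` via arrows in `B`. -/
theorem two_covering_unique_lifting {V W VB : Type}
    (GE : V → V → Prop) (hGrefl : ∀ v, GE v v)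
    (HE : W → W → Prop) (hHrefl : ∀ w, HE w w)
    (p : V → W)
    (hp : ∀ a b, GE a b → HE (p a) (p b))
    (hcov : IsLCov GE HE p 2)
    (BE : VB → VB → Prop) (hBrefl : ∀ b, BE b b)
    (SA : Set VB) (EA : VB → VB → Prop)
    (hEA : ∀ a b, EA a b → BE a b ∧ a ∈ SA ∧ b ∈ SA)
    (hEArefl : ∀ a ∈ SA, EA a a)
    (h1 : ∀ b : VB, ∃ a ∈ SA, BE a b)
    (h2 : ∀ b : VB, ∀ a ∈ SA, ∀ a' ∈ SA, BE a b → BE a' b →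
      ∃ a'' ∈ SA, EA a'' a ∧ EA a'' a')
    (h3 : ∀ b b' : VB, BE b b' → ∃ a a', EA a a' ∧ BE a b ∧ BE a' b') :
    ∀ (α : VB → V) (β : VB → W),
      (∀ a b, EA a b → GE (α a) (α b)) →
      (∀ a b, BE a b → HE (β a) (β b)) →
      (∀ a ∈ SA, β a = p (α a)) →
      ∃! γ : VB → V,
        (∀ a b, BE a b → GE (γ a) (γ b)) ∧
        (∀ a ∈ SA, γ a = α a) ∧
        (∀ b, p (γ b) = β b) := by
  intro α β hα hβ hcomm
  classical
  obtain ⟨c1f, -⟩ := hcov 1 le_rfl (by norm_num)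
  obtain ⟨c2f, -⟩ := hcov 2 (by norm_num) le_rfl
  -- 1-covering in plain edge form
  have cov1 : ∀ g h', HE (p g) h' → ∃! g', GE g g' ∧ p g' = h' := by
    intro g h' hh
    obtain ⟨g', ⟨hg1, hg2⟩, hu⟩ := c1f g h' (dk_of_edge le_rfl hh)
    exact ⟨g', ⟨edge_of_dk1 hGrefl hg1, hg2⟩,
      fun y hy => hu y ⟨dk_of_edge le_rfl hy.1, hy.2⟩⟩
  -- uniqueness of 2-step lifts
  have cov2u : ∀ g h', DkE HE 2 (p g) h' → ∀ x y,
      (∃ m, GE g m ∧ GE m x) → p x = h' → (∃ m, GE g m ∧ GE m y) → p y = h' → x = y := by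
    rintro g h' hh x y ⟨m, hm1, hm2⟩ hx ⟨m', hm1', hm2'⟩ hy
    obtain ⟨z, -, hu⟩ := c2f g h' hh
    exact (hu x ⟨dk2_of_chain hm1 hm2, hx⟩).trans (hu y ⟨dk2_of_chain hm1' hm2', hy⟩).symm
  -- the key existence/uniqueness for each vertex of B
  have key : ∀ b, ∃! g, p g = β b ∧ ∀ a ∈ SA, BE a b → GE (α a) g := by
    intro b
    obtain ⟨a0, ha0, hba0⟩ := h1 b
    have hH0 : HE (p (α a0)) (β b) := by rw [← hcomm a0 ha0]; exact hβ _ _ hba0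
    obtain ⟨g0, ⟨hg0e, hg0p⟩, hg0u⟩ := cov1 (α a0) (β b) hH0
    refine ⟨g0, ⟨hg0p, ?_⟩, ?_⟩
    · intro a ha hba
      obtain ⟨a2, ha2, he1, he0⟩ := h2 b a ha a0 ha0 hba hba0
      have hH : HE (p (α a)) (β b) := by rw [← hcomm a ha]; exact hβ _ _ hba
      obtain ⟨g, ⟨hge, hgp⟩, -⟩ := cov1 (α a) (β b) hH
      have hdk2 : DkE HE 2 (p (α a2)) (β b) := by
        rw [← hcomm a2 ha2]
        exact dk2_of_chain (hβ _ _ (hEA _ _ he1).1) (hβ _ _ hba)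
      have hgg0 : g = g0 := cov2u (α a2) (β b) hdk2 g g0
        ⟨α a, hα _ _ he1, hge⟩ hgp ⟨α a0, hα _ _ he0, hg0e⟩ hg0p
      rw [← hgg0]; exact hge
    · rintro g' ⟨hg'p, hg'A⟩
      exact hg0u g' ⟨hg'A a0 ha0 hba0, hg'p⟩
  set γ : VB → V := fun b => (key b).choose with hγdef
  have hγspec : ∀ b, p (γ b) = β b ∧ ∀ a ∈ SA, BE a b → GE (α a) (γ b) :=
    fun b => (key b).choose_spec.1
  have pγ : ∀ b, p (γ b) = β b := fun b => (hγspec b).1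
  have Aγ : ∀ b, ∀ a ∈ SA, BE a b → GE (α a) (γ b) := fun b => (hγspec b).2
  have γA : ∀ a ∈ SA, γ a = α a := by
    intro a ha
    have hH : HE (p (α a)) (β a) := by rw [← hcomm a ha]; exact hHrefl _
    obtain ⟨g, -, hu⟩ := cov1 (α a) (β a) hH
    have e1 := hu (γ a) ⟨Aγ a a ha (hBrefl a), pγ a⟩
    have e2 := hu (α a) ⟨hGrefl _, (hcomm a ha).symm⟩
    rw [e1, e2]
  have γE : ∀ b b', BE b b' → GE (γ b) (γ b') := by
    intro b b' hbb
    obtain ⟨a, a', hEAaa, hab, ha'b'⟩ := h3 b b' hbb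
    obtain ⟨hBEaa', ha, ha'⟩ := hEA _ _ hEAaa
    have hH1 : HE (p (γ b)) (β b') := by rw [pγ]; exact hβ _ _ hbb
    obtain ⟨x, ⟨hxe, hxp⟩, -⟩ := cov1 (γ b) (β b') hH1
    have hdk2 : DkE HE 2 (p (α a)) (β b') := by
      rw [← hcomm a ha]
      exact dk2_of_chain (hβ _ _ hab) (hβ _ _ hbb)
    have hx' : x = γ b' := cov2u (α a) (β b') hdk2 x (γ b')
      ⟨γ b, Aγ b a ha hab, hxe⟩ hxp
      ⟨α a', hα _ _ hEAaa, Aγ b' a' ha' ha'b'⟩ (pγ b')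
    rw [← hx']; exact hxe
  refine ⟨γ, ⟨γE, γA, pγ⟩, ?_⟩
  rintro γ' ⟨hγ'E, hγ'A, hγ'p⟩
  funext b
  obtain ⟨a0, ha0, hba0⟩ := h1 b
  have hH : HE (p (α a0)) (β b) := by rw [← hcomm a0 ha0]; exact hβ _ _ hba0
  obtain ⟨g, -, hu⟩ := cov1 (α a0) (β b) hH
  have e1 := hu (γ' b) ⟨by rw [← hγ'A a0 ha0]; exact hγ'E _ _ hba0, hγ'p b⟩
  have e2 := hu (γ b) ⟨Aγ b a0 ha0 hba0, pγ b⟩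
  rw [e1, e2]
end

section
/- A digraph map p : G → H is an ℓ-covering if and only if p is a 1-covering and the following rigidity holds: whenever (g₀,…,g_n) and (g'₀,…,g'_m) are directed paths in G with 0 ≤ n, m ≤ ℓ, and either (g₀ = g'₀ and p(g_n) = p(g'_m)) or (p(g₀) = p(g'₀) and g_n = g'_m), then g₀ = g'₀ and g_n = g'_m. -/
lemma dk1_iff {V : Type} (E : V → V → Prop) (hrefl : ∀ v, E v v) (a b : V) :
    DkE E 1 a b ↔ E a b := by
  constructor
  · rintro ⟨n, hn, f, h0, h1, hs⟩
    interval_cases n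
    · subst h0; rw [← h1]; exact hrefl _
    · rw [← h0, ← h1]; exact hs 0 one_pos
  · intro h
    exact ⟨1, le_rfl, fun i => if i = 0 then a else b, rfl, rfl,
      fun i hi => by interval_cases i; simpa using h⟩

lemma pathLen_snoc {V : Type} {E : V → V → Prop} {a b c : V} {n : ℕ}
    (h : PathLen E a b n) (hbc : E b c) : PathLen E a c (n + 1) := by
  obtain ⟨f, h0, h1, hs⟩ := h
  refine ⟨fun i => if i ≤ n then f i else c, by simp [h0], by simp, fun i hi => ?_⟩
  rcases Nat.lt_or_ge i n with h' | h'
  · simp only [h'.le, le_of_lt (Nat.succ_lt_succ h') |>.trans (le_refl _)]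
    simp [h'.le, Nat.succ_le_of_lt h']
    exact hs i h'
  · have : i = n := le_antisymm (Nat.lt_succ_iff.1 hi) h'
    subst this
    simp [h1, hbc]

lemma pathLen_cons {V : Type} {E : V → V → Prop} {a b c : V} {n : ℕ}
    (hab : E a b) (h : PathLen E b c n) : PathLen E a c (n + 1) := by
  obtain ⟨f, h0, h1, hs⟩ := h
  refine ⟨fun i => if i = 0 then a else f (i - 1), by simp, by simp [h1], fun i hi => ?_⟩
  cases i with
  | zero => simpa [h0] using hab
  | succ j => simpa using hs j (Nat.lt_of_succ_lt_succ hi)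

lemma pathLen_map {V W : Type} {E : V → V → Prop} {F : W → W → Prop} {p : V → W}
    (hp : ∀ x y, E x y → F (p x) (p y)) {a b : V} {n : ℕ}
    (h : PathLen E a b n) : PathLen F (p a) (p b) n := by
  obtain ⟨f, h0, h1, hs⟩ := h
  exact ⟨p ∘ f, by simp [h0], by simp [h1], fun i hi => hp _ _ (hs i hi)⟩

lemma lift_fwd {V W : Type} {GE : V → V → Prop} {HE : W → W → Prop} {p : V → W}
    (hcov : IsOneCov GE HE p) :
    ∀ (n : ℕ) (w : ℕ → W) (g : V), p g = w 0 → (∀ i < n, HE (w i) (w (i + 1))) →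
      ∃ g', PathLen GE g g' n ∧ p g' = w n := by
  intro n
  induction n with
  | zero => intro w g h0 _; exact ⟨g, ⟨fun _ => g, rfl, rfl, by omega⟩, h0⟩
  | succ n ih =>
    intro w g h0 hs
    obtain ⟨g', hpath, hpg'⟩ := ih w g h0 (fun i hi => hs i (hi.trans (Nat.lt_succ_self n)))
    have : HE (p g') (w (n + 1)) := hpg' ▸ hs n (Nat.lt_succ_self n)
    obtain ⟨g'', ⟨hGE, hpg''⟩, _⟩ := hcov.1 g' (w (n + 1)) this
    exact ⟨g'', pathLen_snoc hpath hGE, hpg''⟩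

lemma lift_bwd {V W : Type} {GE : V → V → Prop} {HE : W → W → Prop} {p : V → W}
    (hcov : IsOneCov GE HE p) :
    ∀ (n : ℕ) (w : ℕ → W) (g : V), p g = w n → (∀ i < n, HE (w i) (w (i + 1))) →
      ∃ g', PathLen GE g' g n ∧ p g' = w 0 := by
  intro n
  induction n with
  | zero => intro w g h0 _; exact ⟨g, ⟨fun _ => g, rfl, rfl, by omega⟩, h0⟩
  | succ n ih =>
    intro w g h0 hs
    obtain ⟨g₁, hpath, hpg₁⟩ := ih (fun i => w (i + 1)) g h0
      (fun i hi => hs (i + 1) (Nat.succ_lt_succ hi))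
    have : HE (w 0) (p g₁) := hpg₁ ▸ hs 0 (Nat.succ_pos n)
    obtain ⟨g₀, ⟨hGE, hpg₀⟩, _⟩ := hcov.2 g₁ (w 0) this
    exact ⟨g₀, pathLen_cons hGE hpath, hpg₀⟩

/-- A digraph map `p : G → H` is an `ℓ`-covering if and only if `p` is a 1-covering
and the following rigidity holds: whenever `(g₀,…,g_n)` and `(g'₀,…,g'_m)` are directed
paths in `G` with `0 ≤ n, m ≤ ℓ`, and either (`g₀ = g'₀` and `p(g_n) = p(g'_m)`) or
(`p(g₀) = p(g'₀)` and `g_n = g'_m`), then `g₀ = g'₀` and `g_n = g'_m`. -/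
theorem lCovering_iff_oneCovering_and_rigidity {V W : Type}
    (GE : V → V → Prop) (hGrefl : ∀ v, GE v v)
    (HE : W → W → Prop) (hHrefl : ∀ w, HE w w)
    (p : V → W)
    (hp : ∀ a b, GE a b → HE (p a) (p b))
    (l : ℕ) (hl : 1 ≤ l) :
    IsLCov GE HE p l ↔
      (IsOneCov GE HE p ∧
        ∀ (n m : ℕ), n ≤ l → m ≤ l → ∀ f g : ℕ → V,
          (∀ i < n, GE (f i) (f (i + 1))) →
          (∀ i < m, GE (g i) (g (i + 1))) →
          ((f 0 = g 0 ∧ p (f n) = p (g m)) ∨ (p (f 0) = p (g 0) ∧ f n = g m)) →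
          f 0 = g 0 ∧ f n = g m) := by
  constructor
  · intro hL
    have h1 := hL 1 le_rfl hl
    have hcL := hL l hl le_rfl
    constructor
    · constructor
      · intro g h' hH
        obtain ⟨g', ⟨hGE, hpg⟩, huniq⟩ := h1.1 g h' ((dk1_iff HE hHrefl _ _).2 hH)
        exact ⟨g', ⟨(dk1_iff GE hGrefl _ _).1 hGE, hpg⟩,
          fun y hy => huniq y ⟨(dk1_iff GE hGrefl _ _).2 hy.1, hy.2⟩⟩
      · intro g h' hH
        obtain ⟨g', ⟨hGE, hpg⟩, huniq⟩ := h1.2 g h' ((dk1_iff HE hHrefl _ _).2 hH)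
        exact ⟨g', ⟨(dk1_iff GE hGrefl _ _).1 hGE, hpg⟩,
          fun y hy => huniq y ⟨(dk1_iff GE hGrefl _ _).2 hy.1, hy.2⟩⟩
    · intro n m hn hm f g hf hg hcase
      have hfP : PathLen GE (f 0) (f n) n := ⟨f, rfl, rfl, hf⟩
      have hgP : PathLen GE (g 0) (g m) m := ⟨g, rfl, rfl, hg⟩
      have hfp : DkE GE l (f 0) (f n) := ⟨n, hn, hfP⟩
      have hgp : DkE GE l (g 0) (g m) := ⟨m, hm, hgP⟩
      rcases hcase with ⟨h0, hpe⟩ | ⟨hp0, hnm⟩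
      · have hH : DkE HE l (p (f 0)) (p (f n)) := ⟨n, hn, pathLen_map hp hfP⟩
        obtain ⟨x, _, hu⟩ := hcL.1 (f 0) (p (f n)) hH
        have e1 := hu (f n) ⟨hfp, rfl⟩
        have e2 := hu (g m) ⟨h0 ▸ hgp, hpe.symm⟩
        exact ⟨h0, e1.trans e2.symm⟩
      · have hH : DkE HE l (p (f 0)) (p (f n)) := ⟨n, hn, pathLen_map hp hfP⟩
        obtain ⟨x, _, hu⟩ := hcL.2 (f n) (p (f 0)) hH
        have e1 := hu (f 0) ⟨hfp, rfl⟩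
        have e2 := hu (g 0) ⟨hnm ▸ hgp, hp0.symm⟩
        exact ⟨e1.trans e2.symm, hnm⟩
  · rintro ⟨hcov, hrig⟩ k hk1 hkl
    constructor
    · intro g h' hH
      obtain ⟨n, hn, w, hw0, hwn, hws⟩ := hH
      obtain ⟨g', hpath, hpg'⟩ := lift_fwd hcov n w g hw0.symm hws
      refine ⟨g', ⟨⟨n, hn, hpath⟩, hpg'.trans hwn⟩, ?_⟩
      rintro y ⟨⟨m, hm, fy, hy0, hym, hys⟩, hpy⟩
      obtain ⟨fx, hx0, hxn, hxs⟩ := hpath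
      have := hrig m n (hm.trans hkl) (hn.trans hkl) fy fx hys hxs
        (Or.inl ⟨by rw [hy0, hx0], by rw [hym, hxn, hpy, hpg'.trans hwn]⟩)
      rw [← hym, ← hxn]; exact this.2
    · intro g h' hH
      obtain ⟨n, hn, w, hw0, hwn, hws⟩ := hH
      obtain ⟨g', hpath, hpg'⟩ := lift_bwd hcov n w g hwn.symm hws
      refine ⟨g', ⟨⟨n, hn, hpath⟩, hpg'.trans hw0⟩, ?_⟩
      rintro y ⟨⟨m, hm, fy, hy0, hym, hys⟩, hpy⟩
      obtain ⟨fx, hx0, hxn, hxs⟩ := hpath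
      have := hrig m n (hm.trans hkl) (hn.trans hkl) fy fx hys hxs
        (Or.inr ⟨by rw [hy0, hx0, hpy, hpg'.trans hw0], by rw [hym, hxn]⟩)
      rw [← hy0, ← hx0]; exact this.1
end

section
/- The map Φ̃_{i,ε} : I_{6m}^{⊗n} → I_{2m}^{⊗n} defined by Φ̃(v)_k = c^{2m}(v_k) for k ≠ i, Φ̃(v)_i = max{c^{2m}(v_i), 2m − D(σ_i v)} if ε = 0, and Φ̃(v)_i = min{c^{2m}(v_i), D(σ_i v)} if ε = 1, where D(w) = max_j |w_j − φ(w_j)| with φ(x) = clamp of x to [2m, 4m], is a digraph map whose image lies in the open-box subdigraph |⊓ⁿ_{i,ε}|_{2m}, and whose restriction to |⊓ⁿ_{i,ε}|_{6m} equals the central truncation c^{2m} applied coordinatewise. -/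
/-- Arrows of the interval `I_M` on `{0,…,M}` (ignoring the bound, which is imposed
separately): besides loops, `2i → 2i+1` and `2j+2 → 2j+1`, i.e. an arrow from an even
vertex to each of its neighbours. -/
def IEr (a b : ℕ) : Prop :=
  a = b ∨ (a % 2 = 0 ∧ (b = a + 1 ∨ a = b + 1))

/-- Edge relation of the `n`-fold box power `I_M^{⊗n}`, on tuples `v : ℕ → ℕ`
(only the coordinates `< n` matter): all coordinates are `≤ M`, and the two tuples
agree except in one coordinate, where they form an arrow of `I_M`. -/
def CubeE (n M : ℕ) (v w : ℕ → ℕ) : Prop :=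
  (∀ l < n, v l ≤ M ∧ w l ≤ M) ∧
  ∃ k < n, IEr (v k) (w k) ∧ ∀ l < n, l ≠ k → v l = w l

/-- The central truncation `c^{2m} : I_{6m} → I_{2m}`:
`x ↦ 0` for `x ≤ 2m`, `x ↦ x − 2m` for `2m ≤ x ≤ 4m`, `x ↦ 2m` for `x ≥ 4m`. -/
def c2m (m x : ℕ) : ℕ := min x (4 * m) - 2 * m

/-- `φ : {0,…,6m} → {0,…,6m}`, clamping to `[2m, 4m]`. -/
def phiClamp (m x : ℕ) : ℕ := max (2 * m) (min x (4 * m))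

/-- `D(σ_i v) = max_{j ≠ i, j < n} |v_j − φ(v_j)|`. -/
def Dphi (m n i : ℕ) (v : ℕ → ℕ) : ℕ :=
  Finset.sup ((Finset.range n).erase i) (fun j => Nat.dist (v j) (phiClamp m (v j)))

/-- The map `Φ̃_{i,ε} : I_{6m}^{⊗n} → I_{2m}^{⊗n}`. -/
def PhiTilde (m n i ε : ℕ) (v : ℕ → ℕ) : ℕ → ℕ := fun k =>
  if k = i then
    (if ε = 0 then max (c2m m (v i)) (2 * m - Dphi m n i v)
     else min (c2m m (v i)) (Dphi m n i v))
  else c2m m (v k)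

/-- The vertex set of the open box `|⊓ⁿ_{i,ε}|_M ⊆ I_M^{⊗n}`: tuples `v` with all
coordinates `≤ M` such that either some coordinate `v_k` with `k ≠ i` lies in
`{0, M}`, or `v_i = (1−ε)·M`. -/
def HornSet (n M i ε : ℕ) : Set (ℕ → ℕ) :=
  {v | (∀ l < n, v l ≤ M) ∧
    ((∃ k < n, k ≠ i ∧ (v k = 0 ∨ v k = M)) ∨ v i = (1 - ε) * M)}

/-!
Three facts about a single coordinate drive everything. The truncation `c^{2m}` and the
defect `x ↦ |x − φ(x)|` are both maps of intervals `I_{6m} → I_{2m}`, and along every arrow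
of `I_{6m}` at least one of them is constant: `c^{2m}` is constant on `[0, 2m]` and on
`[4m, 6m]`, the defect vanishes on `[2m, 4m]`, and no arrow leaves two of these pieces at
once. Hence when `v → w` moves a coordinate `k ≠ i`, the image moves either in coordinate
`k` (through `c^{2m}`) or in coordinate `i` (through `D`), never in both. On the open box
some coordinate `k ≠ i` sits at `0` or `6m`, so `D = 2m`, or `v_i` sits at the end that makes
the `max`/`min` in coordinate `i` collapse to `c^{2m}(v_i)`.
-/

namespace IEr

variable {a b : ℕ}

theorem refl (a : ℕ) : IEr a a := Or.inl rfl

theorem max_const (h : IEr a b) (t : ℕ) : IEr (max a t) (max b t) := by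
  unfold IEr at *; omega

theorem const_max (h : IEr a b) (t : ℕ) : IEr (max t a) (max t b) := by
  unfold IEr at *; omega

theorem min_const (h : IEr a b) (t : ℕ) : IEr (min a t) (min b t) := by
  unfold IEr at *; omega

theorem const_min (h : IEr a b) (t : ℕ) : IEr (min t a) (min t b) := by
  unfold IEr at *; omega

theorem tsub_const (h : IEr a b) {s : ℕ} (hs : Even s) : IEr (a - s) (b - s) := by
  rw [Nat.even_iff] at hs; unfold IEr at *; omega

theorem const_tsub (h : IEr a b) {u : ℕ} (hu : Even u) : IEr (u - a) (u - b) := by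
  rw [Nat.even_iff] at hu; unfold IEr at *; omega

theorem c2m (h : IEr a b) (m : ℕ) : IEr (_root_.c2m m a) (_root_.c2m m b) :=
  (h.min_const _).tsub_const (even_two_mul m)

theorem dist_phiClamp (h : IEr a b) (m : ℕ) :
    IEr (Nat.dist a (phiClamp m a)) (Nat.dist b (phiClamp m b)) := by
  unfold IEr Nat.dist phiClamp at *; omega

theorem c2m_eq_or_dist_phiClamp_eq (h : IEr a b) (m : ℕ) :
    _root_.c2m m a = _root_.c2m m b ∨ Nat.dist a (phiClamp m a) = Nat.dist b (phiClamp m b) := by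
  unfold IEr _root_.c2m Nat.dist phiClamp at *; omega

theorem finset_sup {ι : Type*} [DecidableEq ι] {s : Finset ι} {f g : ι → ℕ} {k : ι}
    (hk : IEr (f k) (g k)) (hfg : ∀ j ∈ s, j ≠ k → f j = g j) : IEr (s.sup f) (s.sup g) := by
  have hrest : (s.erase k).sup f = (s.erase k).sup g :=
    Finset.sup_congr rfl fun j hj => hfg j (Finset.mem_of_mem_erase hj) (Finset.ne_of_mem_erase hj)
  by_cases hks : k ∈ s
  · rw [← Finset.insert_erase hks, Finset.sup_insert, Finset.sup_insert, hrest]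
    exact hk.max_const _
  · rw [← Finset.erase_eq_of_notMem hks, hrest]
    exact refl _

end IEr

theorem c2m_le (m x : ℕ) : c2m m x ≤ 2 * m := by
  unfold c2m; omega

section Dphi

variable {m n i : ℕ} {v w : ℕ → ℕ}

theorem Dphi_congr
    (h : ∀ j < n, j ≠ i → Nat.dist (v j) (phiClamp m (v j)) = Nat.dist (w j) (phiClamp m (w j))) :
    Dphi m n i v = Dphi m n i w :=
  Finset.sup_congr rfl fun j hj =>
    h j (Finset.mem_range.mp (Finset.mem_of_mem_erase hj)) (Finset.ne_of_mem_erase hj)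

theorem IEr_Dphi {k : ℕ} (hk : IEr (v k) (w k)) (hvw : ∀ j < n, j ≠ k → v j = w j) :
    IEr (Dphi m n i v) (Dphi m n i w) :=
  IEr.finset_sup (hk.dist_phiClamp m) fun j hj hjk => by
    rw [hvw j (Finset.mem_range.mp (Finset.mem_of_mem_erase hj)) hjk]

theorem Dphi_le (hv : ∀ l < n, v l ≤ 6 * m) : Dphi m n i v ≤ 2 * m :=
  Finset.sup_le fun j hj => by
    have := hv j (Finset.mem_range.mp (Finset.mem_of_mem_erase hj))
    unfold Nat.dist phiClamp; omega

theorem dist_phiClamp_le_Dphi {k : ℕ} (hk : k < n) (hki : k ≠ i) :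
    Nat.dist (v k) (phiClamp m (v k)) ≤ Dphi m n i v :=
  Finset.le_sup (f := fun j => Nat.dist (v j) (phiClamp m (v j)))
    (Finset.mem_erase.mpr ⟨hki, Finset.mem_range.mpr hk⟩)

theorem Dphi_eq_zero (hv : ∀ j < n, j ≠ i → 2 * m < v j ∧ v j < 4 * m) : Dphi m n i v = 0 :=
  Nat.le_zero.mp <| Finset.sup_le fun j hj => by
    have := hv j (Finset.mem_range.mp (Finset.mem_of_mem_erase hj)) (Finset.ne_of_mem_erase hj)
    unfold Nat.dist phiClamp; omega

end Dphi

section PhiTilde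

variable {m n i ε : ℕ} {v w : ℕ → ℕ}

theorem PhiTilde_self :
    PhiTilde m n i ε v i =
      if ε = 0 then max (c2m m (v i)) (2 * m - Dphi m n i v)
      else min (c2m m (v i)) (Dphi m n i v) :=
  if_pos rfl

theorem PhiTilde_of_ne {k : ℕ} (hki : k ≠ i) : PhiTilde m n i ε v k = c2m m (v k) :=
  if_neg hki

theorem PhiTilde_le (k : ℕ) : PhiTilde m n i ε v k ≤ 2 * m := by
  unfold PhiTilde
  split_ifs
  · exact max_le (c2m_le _ _) tsub_le_self
  · exact (min_le_left _ _).trans (c2m_le _ _)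
  · exact c2m_le _ _

theorem IEr_PhiTilde_self_of_Dphi_eq (hc : IEr (v i) (w i)) (hD : Dphi m n i v = Dphi m n i w) :
    IEr (PhiTilde m n i ε v i) (PhiTilde m n i ε w i) := by
  rw [PhiTilde_self, PhiTilde_self, hD]
  split_ifs
  · exact (hc.c2m m).max_const _
  · exact (hc.c2m m).min_const _

theorem IEr_PhiTilde_self_of_eq (hc : v i = w i) (hD : IEr (Dphi m n i v) (Dphi m n i w)) :
    IEr (PhiTilde m n i ε v i) (PhiTilde m n i ε w i) := by
  rw [PhiTilde_self, PhiTilde_self, hc]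
  split_ifs
  · exact (hD.const_tsub (even_two_mul m)).const_max _
  · exact hD.const_min _

theorem cubeE_PhiTilde (hi : i < n) (h : CubeE n (6 * m) v w) :
    CubeE n (2 * m) (PhiTilde m n i ε v) (PhiTilde m n i ε w) := by
  obtain ⟨-, k, hk, hvwk, hvw⟩ := h
  refine ⟨fun l _ => ⟨PhiTilde_le l, PhiTilde_le l⟩, ?_⟩
  have hoff : ∀ {j}, j < n → j ≠ i → j ≠ k → PhiTilde m n i ε v j = PhiTilde m n i ε w j :=
    fun hj hji hjk => by rw [PhiTilde_of_ne hji, PhiTilde_of_ne hji, hvw _ hj hjk]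
  by_cases hki : k = i
  · subst hki
    have hD : Dphi m n k v = Dphi m n k w :=
      Dphi_congr fun j hj hjk => by rw [hvw j hj hjk]
    exact ⟨k, hk, IEr_PhiTilde_self_of_Dphi_eq hvwk hD, fun l hl hlk => hoff hl hlk hlk⟩
  have hvwi : v i = w i := hvw i hi (Ne.symm hki)
  rcases hvwk.c2m_eq_or_dist_phiClamp_eq m with hc | hdist
  · refine ⟨i, hi, IEr_PhiTilde_self_of_eq hvwi (IEr_Dphi hvwk hvw), fun l hl hli => ?_⟩
    by_cases hlk : l = k
    · rw [hlk, PhiTilde_of_ne hki, PhiTilde_of_ne hki, hc]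
    · exact hoff hl hli hlk
  · have hD : Dphi m n i v = Dphi m n i w := Dphi_congr fun j hj _ => by
      by_cases hjk : j = k
      · rw [hjk, hdist]
      · rw [hvw j hj hjk]
    refine ⟨k, hk, ?_, fun l hl hlk => ?_⟩
    · rw [PhiTilde_of_ne hki, PhiTilde_of_ne hki]
      exact hvwk.c2m m
    by_cases hli : l = i
    · rw [hli, PhiTilde_self, PhiTilde_self, hvwi, hD]
    · exact hoff hl hli hlk

theorem PhiTilde_mem_HornSet : PhiTilde m n i ε v ∈ HornSet n (2 * m) i ε := by
  refine ⟨fun l _ => PhiTilde_le l, ?_⟩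
  by_cases hend : ∃ k < n, k ≠ i ∧ (v k ≤ 2 * m ∨ 4 * m ≤ v k)
  · obtain ⟨k, hk, hki, hvk⟩ := hend
    refine Or.inl ⟨k, hk, hki, ?_⟩
    rw [PhiTilde_of_ne hki]
    unfold c2m; omega
  · push Not at hend
    have hD : Dphi m n i v = 0 := Dphi_eq_zero hend
    right
    rw [PhiTilde_self, hD]
    have := c2m_le m (v i)
    split_ifs with hε
    · subst hε; omega
    · simp [Nat.sub_eq_zero_of_le (Nat.one_le_iff_ne_zero.mpr hε)]

theorem PhiTilde_eq_c2m_of_mem_HornSet (hv : v ∈ HornSet n (6 * m) i ε) (k : ℕ) :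
    PhiTilde m n i ε v k = c2m m (v k) := by
  by_cases hki : k = i
  swap; · exact PhiTilde_of_ne hki
  subst hki
  obtain ⟨hle, hend | hvk⟩ := hv
  · obtain ⟨j, hj, hjk, hvj⟩ := hend
    have hD : Dphi m n k v = 2 * m := by
      have := dist_phiClamp_le_Dphi (m := m) (v := v) hj hjk
      have := Dphi_le (i := k) hle
      have := hle j hj
      unfold Nat.dist phiClamp at *; omega
    have := c2m_le m (v k)
    rw [PhiTilde_self, hD]
    split_ifs <;> omega
  · rw [PhiTilde_self]
    split_ifs with hε
    · subst hε
      unfold c2m; omega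
    · rw [Nat.sub_eq_zero_of_le (Nat.one_le_iff_ne_zero.mpr hε), zero_mul] at hvk
      simp [c2m, hvk]

end PhiTilde

theorem phiTilde_properties_general (m n i ε : ℕ) (hi : i < n) :
    (∀ v w, CubeE n (6 * m) v w → CubeE n (2 * m) (PhiTilde m n i ε v) (PhiTilde m n i ε w)) ∧
    (∀ v : ℕ → ℕ, (∀ l < n, v l ≤ 6 * m) → PhiTilde m n i ε v ∈ HornSet n (2 * m) i ε) ∧
    (∀ v ∈ HornSet n (6 * m) i ε, ∀ k < n, PhiTilde m n i ε v k = c2m m (v k)) :=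
  ⟨fun _ _ => cubeE_PhiTilde hi, fun _ _ => PhiTilde_mem_HornSet,
    fun _ hv k _ => PhiTilde_eq_c2m_of_mem_HornSet hv k⟩

/-- The map `Φ̃_{i,ε}` is a digraph map `I_{6m}^{⊗n} → I_{2m}^{⊗n}` whose image lies
in the open box `|⊓ⁿ_{i,ε}|_{2m}`, and whose restriction to `|⊓ⁿ_{i,ε}|_{6m}` equals
the central truncation `c^{2m}` applied coordinatewise. -/
theorem phiTilde_properties (m n i ε : ℕ) (hi : i < n) (hε : ε ≤ 1) :
    (∀ v w, CubeE n (6 * m) v w → CubeE n (2 * m) (PhiTilde m n i ε v) (PhiTilde m n i ε w)) ∧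
    (∀ v : ℕ → ℕ, (∀ l < n, v l ≤ 6 * m) → PhiTilde m n i ε v ∈ HornSet n (2 * m) i ε) ∧
    (∀ v ∈ HornSet n (6 * m) i ε, ∀ k < n, PhiTilde m n i ε v k = c2m m (v k)) :=
  phiTilde_properties_general m n i ε hi
end

section
/- For m even, the map ρⁿ_{m+2,j} : I_{m+2}^{⊗n} ⊗ I₂ → I_{m+2}^{⊗(j+1)} ⊗ I_m^{⊗(n−j−1)} given by ρ(v₁,…,v_n, v_{n+1}) = (v₁,…,v_j, r^{v_{n+1}}(v_{j+1}), r²(v_{j+2}),…, r²(v_n)) is a well-defined digraph map, where r is the right truncation. -/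
/-- Edge relation of a mixed box product of intervals of dimensions `b 0, …, b (N−1)`,
on tuples `v : ℕ → ℕ` (only coordinates `< N` matter): coordinatewise bounds, and the
two tuples agree except in one coordinate where they form an interval arrow. -/
def MTensE (N : ℕ) (b : ℕ → ℕ) (v w : ℕ → ℕ) : Prop :=
  (∀ l < N, v l ≤ b l ∧ w l ≤ b l) ∧
  ∃ k < N, IEr (v k) (w k) ∧ ∀ l < N, l ≠ k → v l = w l

/-- The map `ρⁿ_{m+2,j} : I_{m+2}^{⊗n} ⊗ I₂ → I_{m+2}^{⊗(j+1)} ⊗ I_m^{⊗(n−j−1)}`,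
`(v₁,…,v_n,t) ↦ (v₁,…,v_j, r^t(v_{j+1}), r²(v_{j+2}),…, r²(v_n))`, where the
`t`-fold right truncation `r^t` out of `I_{m+2}` clamps at `m+2−t`.  We index the
`n+1` input coordinates by `0,…,n`, the last one (`t = v n`) ranging in `I₂`. -/
def rhoMap (m n j : ℕ) (v : ℕ → ℕ) : ℕ → ℕ := fun k =>
  if k < j then v k
  else if k = j then min (v j) (m + 2 - v n)
  else min (v k) m

/-- For `m` even, the map `ρⁿ_{m+2,j}` is a well-defined digraph map
`I_{m+2}^{⊗n} ⊗ I₂ → I_{m+2}^{⊗(j+1)} ⊗ I_m^{⊗(n−j−1)}`. -/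
theorem rho_is_digraph_map (m n j : ℕ) (hm : Even m) (hj : j < n) :
    ∀ v w, MTensE (n + 1) (fun l => if l < n then m + 2 else 2) v w →
      MTensE n (fun l => if l ≤ j then m + 2 else m) (rhoMap m n j v) (rhoMap m n j w) := by
  obtain ⟨c, hc⟩ := hm
  rintro v w ⟨hb, k, hkn, hek, heql⟩
  have hvn : v n ≤ 2 := by have := (hb n (by omega)).1; simpa using this
  have hwn : w n ≤ 2 := by have := (hb n (by omega)).2; simpa using this
  have hbv : ∀ l, l < n → v l ≤ m + 2 := fun l hl => by
    have := (hb l (by omega)).1; simpa [hl] using this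
  have hbw : ∀ l, l < n → w l ≤ m + 2 := fun l hl => by
    have := (hb l (by omega)).2; simpa [hl] using this
  have hrv : ∀ u : ℕ → ℕ, rhoMap m n j u j = min (u j) (m + 2 - u n) := fun u => by
    simp [rhoMap]
  refine ⟨?_, ?_⟩
  · intro l hl
    have hv := hbv l hl
    have hw := hbw l hl
    show (_ ≤ if l ≤ j then m + 2 else m) ∧ (_ ≤ if l ≤ j then m + 2 else m)
    simp only [rhoMap]
    split_ifs <;> constructor <;> omega
  · by_cases hk : k = n
    · subst hk
      refine ⟨j, hj, ?_, ?_⟩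
      · have h1 : v j = w j := heql j (by omega) (by omega)
        have hv := hbv j hj
        rw [hrv v, hrv w]
        unfold IEr at hek ⊢
        omega
      · intro l hl hlj
        have h2 : v l = w l := heql l (by omega) (by omega)
        simp only [rhoMap]
        split_ifs <;> simp [h2]
    · have hkn' : k < n := by omega
      have hvw : v n = w n := heql n (by omega) (fun h => hk h.symm)
      refine ⟨k, hkn', ?_, ?_⟩
      · have hv := hbv k hkn'
        have hw := hbw k hkn'
        simp only [rhoMap]
        unfold IEr at hek ⊢
        split_ifs with h1 h2
        · exact hek
        · subst h2; rw [← hvw]; omega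
        · omega
      · intro l hl hlk
        have h2 : v l = w l := heql l (by omega) hlk
        simp only [rhoMap]
        split_ifs with h1 h2'
        · exact h2
        · rw [heql j (by omega) (by omega), hvw]
        · rw [h2]
end

section
/- The composite map ρ̄ⁿ_{m+2,j} = ρⁿ_{m+2,j} ∘ (id^{⊗n} ⊗ r^m) : I_{m+2}^{⊗(n+1)} → I_{m+2}^{⊗(j+1)} ⊗ I_m^{⊗(n−j−1)} satisfies: (i) ρ̄ⁿ_{m+2,j} ∘ ∂^{i,ε} = ∂̃^{i,ε} ∘ ρ̄^{n−1}_{m+2,j−1} for i < j+1 ≤ n; (ii) ρ̄ⁿ_{m+2,j} ∘ ∂^{i,ε} = ∂̂^{i,ε} ∘ ρ̄^{n−1}_{m+2,j} for j+1 < i ≤ n; (iii) ρ̄ⁿ_{m+2,j} ∘ ∂^{j+1,ε} factors through id^{⊗j} ⊗ (r²)^{⊗(n−j)}; (iv) ρ̄ⁿ_{m+2,j} ∘ ∂^{n+1,1} = id^{⊗j} ⊗ (r²)^{⊗(n−j)}; (v) ρ̄ⁿ_{m+2,j} ∘ ∂^{n+1,0} = id^{⊗(j+1)} ⊗ (r²)^{⊗(n−j−1)},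 for m ≥ 2 even, 0 ≤ j ≤ n−1. -/
/-- The coface operation: insert the value `x` at (0-indexed) position `p`. -/
def ins (p x : ℕ) (v : ℕ → ℕ) : ℕ → ℕ := fun l =>
  if l < p then v l else if l = p then x else v (l - 1)

/-- The composite `ρ̄ⁿ_{m+2,j} = ρⁿ_{m+2,j} ∘ (id^{⊗n} ⊗ r^m) :
I_{m+2}^{⊗(n+1)} → I_{m+2}^{⊗(j+1)} ⊗ I_m^{⊗(n−j−1)}` (coordinates of the domain
indexed by `0,…,n`), where `r` is the right truncation. -/
def rhoBar (m n j : ℕ) (v : ℕ → ℕ) : ℕ → ℕ := fun k =>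
  if k < j then v k
  else if k = j then min (v j) (m + 2 - min (v n) 2)
  else min (v k) m

set_option maxHeartbeats 2000000

/-- Lemma on the compatibility of `ρ̄ⁿ_{m+2,j}` with the coface maps `∂^{i,ε}`
(insertion positions written 0-indexed, so the paper's `∂^{i,ε}`, `1 ≤ i ≤ n+1`,
inserts at position `p = i−1`): for `m ≥ 2` even and `0 ≤ j ≤ n−1`,
(i) `ρ̄ⁿ_{m+2,j} ∘ ∂^{p,ε} = ∂̃^{p,ε} ∘ ρ̄^{n−1}_{m+2,j−1}` for `p < j`;
(ii) `ρ̄ⁿ_{m+2,j} ∘ ∂^{p,ε} = ∂̂^{p,ε} ∘ ρ̄^{n−1}_{m+2,j}` for `j < p < n`;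
(iii) `ρ̄ⁿ_{m+2,j} ∘ ∂^{j,ε}` factors through `id^{⊗j} ⊗ (r²)^{⊗(n−j)}`;
(iv) `ρ̄ⁿ_{m+2,j} ∘ ∂^{n,1} = id^{⊗j} ⊗ (r²)^{⊗(n−j)}`;
(v) `ρ̄ⁿ_{m+2,j} ∘ ∂^{n,0} = id^{⊗(j+1)} ⊗ (r²)^{⊗(n−j−1)}`,
all equalities of maps being checked on the vertices of `I_{m+2}^{⊗n}` and on the
`n` coordinates of the codomain. -/
theorem rhoBar_coface_identities (m n j : ℕ)
    (hm2 : 2 ≤ m) (hme : Even m) (hj : j + 1 ≤ n) :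
    -- (i)
    (∀ p < j, ∀ ε ≤ 1, ∀ v : ℕ → ℕ, (∀ l < n, v l ≤ m + 2) → ∀ k < n,
      rhoBar m n j (ins p (ε * (m + 2)) v) k
        = ins p (ε * (m + 2)) (rhoBar m (n - 1) (j - 1) v) k) ∧
    -- (ii)
    (∀ p, j < p → p < n → ∀ ε ≤ 1, ∀ v : ℕ → ℕ, (∀ l < n, v l ≤ m + 2) → ∀ k < n,
      rhoBar m n j (ins p (ε * (m + 2)) v) k
        = ins p (ε * m) (rhoBar m (n - 1) j v) k) ∧
    -- (iii)
    (∀ ε ≤ 1, ∃ ψ : (ℕ → ℕ) → (ℕ → ℕ),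
      (∀ v w, MTensE n (fun l => if l < j then m + 2 else m) v w →
        MTensE n (fun l => if l ≤ j then m + 2 else m) (ψ v) (ψ w)) ∧
      (∀ v : ℕ → ℕ, (∀ l < n, v l ≤ m + 2) → ∀ k < n,
        rhoBar m n j (ins j (ε * (m + 2)) v) k
          = ψ (fun l => if l < j then v l else min (v l) m) k)) ∧
    -- (iv)
    (∀ v : ℕ → ℕ, (∀ l < n, v l ≤ m + 2) → ∀ k < n,
      rhoBar m n j (ins n (m + 2) v) k = (if k < j then v k else min (v k) m)) ∧
    -- (v)
    (∀ v : ℕ → ℕ, (∀ l < n, v l ≤ m + 2) → ∀ k < n,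
      rhoBar m n j (ins n 0 v) k = (if k ≤ j then v k else min (v k) m)) := by

  have hm : m % 2 = 0 := Nat.even_iff.mp hme
  refine ⟨?_, ?_, ?_, ?_, ?_⟩
  · -- (i)
    intro p hp ε hε v hv k hk
    have h1 := hv k hk
    have h2 := hv (k - 1) (by omega)
    have h3 := hv j (by omega)
    have h4 := hv (n - 1) (by omega)
    interval_cases ε <;>
      simp only [rhoBar, ins] <;> split_ifs <;> (try subst_vars) <;> omega
  · -- (ii)
    intro p hjp hpn ε hε v hv k hk
    have h1 := hv k hk
    have h2 := hv (k - 1) (by omega)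
    have h3 := hv j (by omega)
    have h4 := hv (n - 1) (by omega)
    interval_cases ε <;>
      simp only [rhoBar, ins] <;> split_ifs <;> (try subst_vars) <;> omega
  · -- (iii)
    intro ε hε
    refine ⟨fun u k => if k < j then u k
      else if k = j then min (ε * (m + 2)) (m + 2 - min (u (n - 1)) 2)
      else u (k - 1), ?_, ?_⟩
    · rintro u w ⟨hb, k, hk, hIE, hind⟩
      constructor
      · intro l hl
        have h1 := hb l hl
        have h2 := hb (l - 1) (by omega)
        simp only at h1 h2 ⊢
        constructor <;> (split_ifs at h1 h2 ⊢ <;> omega)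
      · by_cases hkn : k = n - 1
        · subst hkn
          refine ⟨j, by omega, ?_, ?_⟩
          · simp only [lt_irrefl, eq_self_iff_true, if_false, if_true]
            unfold IEr at hIE ⊢
            omega
          · intro l hl hlj
            simp only
            rcases lt_trichotomy l j with h | h | h
            · rw [if_pos h, if_pos h]
              exact hind l hl (by omega)
            · exact absurd h hlj
            · rw [if_neg (show ¬ l < j by omega), if_neg hlj,
                if_neg (show ¬ l < j by omega), if_neg hlj]
              exact hind (l - 1) (by omega) (by omega)
        · by_cases hkj : k < j
          · refine ⟨k, hk, ?_, ?_⟩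
            · simp only
              rw [if_pos hkj, if_pos hkj]
              exact hIE
            · intro l hl hlk
              simp only
              rcases lt_trichotomy l j with h | h | h
              · rw [if_pos h, if_pos h]
                exact hind l hl hlk
              · rw [if_neg (show ¬ l < j by omega), if_pos h,
                  if_neg (show ¬ l < j by omega), if_pos h,
                  hind (n - 1) (by omega) (by omega)]
              · rw [if_neg (show ¬ l < j by omega), if_neg (show ¬ l = j by omega),
                  if_neg (show ¬ l < j by omega), if_neg (show ¬ l = j by omega)]
                exact hind (l - 1) (by omega) (by omega)
          · refine ⟨k + 1, by omega, ?_, ?_⟩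
            · simp only
              rw [if_neg (show ¬ k + 1 < j by omega), if_neg (show ¬ k + 1 = j by omega),
                if_neg (show ¬ k + 1 < j by omega), if_neg (show ¬ k + 1 = j by omega)]
              simpa using hIE
            · intro l hl hlk
              simp only
              rcases lt_trichotomy l j with h | h | h
              · rw [if_pos h, if_pos h]
                exact hind l hl (by omega)
              · rw [if_neg (show ¬ l < j by omega), if_pos h,
                  if_neg (show ¬ l < j by omega), if_pos h,
                  hind (n - 1) (by omega) (by omega)]
              · rw [if_neg (show ¬ l < j by omega), if_neg (show ¬ l = j by omega),
                  if_neg (show ¬ l < j by omega), if_neg (show ¬ l = j by omega)]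
                exact hind (l - 1) (by omega) (by omega)
    · intro v hv k hk
      have h1 := hv k hk
      have h2 := hv (k - 1) (by omega)
      have h3 := hv j (by omega)
      have h4 := hv (n - 1) (by omega)
      simp only [rhoBar, ins] <;> split_ifs <;> (try subst_vars) <;> omega
  · -- (iv)
    intro v hv k hk
    have h1 := hv k hk
    have h2 := hv (k - 1) (by omega)
    have h3 := hv j (by omega)
    simp only [rhoBar, ins] <;> split_ifs <;> (try subst_vars) <;> omega
  · -- (v)
    intro v hv k hk
    have h1 := hv k hk
    have h2 := hv (k - 1) (by omega)
    have h3 := hv j (by omega)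
    simp only [rhoBar, ins] <;> split_ifs <;> (try subst_vars) <;> omega
end

section
/- If an in-closed subdigraph H ⊆ G is a directed deformation retract, then the inclusion H → G is a homotopy equivalence on each level: writing G_n for the induced subdigraph of vertices g with ηⁿ(g) ∈ H, and η_n for the restriction of η to G_n, we have r_n ∘ i_n = id_H and i_n ∘ r_n = η_nⁿ is homotopic to id_{G_n}, where i_n : H → G_n is the inclusion and r_n(g) = η_nⁿ(g); the homotopy is a one-step homotopy chain coming from the arrows η(g) → g. -/
/-- The `n`-th level `G_n` of a directed deformation retract: the vertices `g` with
`ηⁿ(g) ∈ S`. -/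
def levelSet {V : Type} (S : Set V) (η : V → V) (n : ℕ) : Set V :=
  {g | η^[n] g ∈ S}

/-- One-step homotopy relation between self-maps of the induced subdigraph on `G_n`:
both are digraph self-maps of `G_n`, and for each vertex there is an arrow
`φ(g) → ψ(g)` or an arrow `ψ(g) → φ(g)`. -/
def LevelHtpyStep {V : Type} (GE : V → V → Prop) (Gn : Set V) (φ ψ : V → V) : Prop :=
  (∀ g ∈ Gn, φ g ∈ Gn) ∧ (∀ g ∈ Gn, ψ g ∈ Gn) ∧
  (∀ a ∈ Gn, ∀ b ∈ Gn, GE a b → GE (φ a) (φ b)) ∧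
  (∀ a ∈ Gn, ∀ b ∈ Gn, GE a b → GE (ψ a) (ψ b)) ∧
  (∀ g ∈ Gn, GE (φ g) (ψ g) ∨ GE (ψ g) (φ g))

/-- If an in-closed subdigraph `H ⊆ G` (vertex set `S`) is a directed deformation
retract witnessed by `η`, then on each level `G_n = {g | ηⁿ(g) ∈ S}`: `η` restricts
to a self-map of `G_n`, the maps `i_n : H → G_n` (inclusion) and `r_n = ηⁿ` satisfy
`r_n ∘ i_n = id_H`, and `i_n ∘ r_n = ηⁿ` is homotopic to `id_{G_n}` by a chain of
one-step homotopies coming from the arrows `η(g) → g`. -/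
theorem ddr_levelwise_homotopy_equivalence {V : Type}
    (GE : V → V → Prop) (hG : ∀ v, GE v v)
    (S : Set V)
    (hin : ∀ a b, GE a b → b ∈ S → a ∈ S)
    (η : V → V)
    (hηmap : ∀ a b, GE a b → GE (η a) (η b))
    (hDDR1 : ∀ g, GE (η g) g)
    (hDDR2 : ∀ h ∈ S, η h = h)
    (hDDR3 : ∀ g, g ∉ S → ∀ h ∈ S, ddist GE h g = ddist GE h (η g) + 1)
    (n : ℕ) :
    S ⊆ levelSet S η n ∧
    (∀ g ∈ levelSet S η n, η g ∈ levelSet S η n) ∧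
    (∀ h ∈ S, η^[n] h = h) ∧
    Relation.ReflTransGen (LevelHtpyStep GE (levelSet S η n))
      (fun g => η^[n] g) id := by
  have hfix : ∀ h ∈ S, η^[n] h = h := by
    intro h hh
    induction n with
    | zero => simp
    | succ m ih => rw [Function.iterate_succ_apply', ih, hDDR2 h hh]
  have hsub : S ⊆ levelSet S η n := by
    intro h hh
    show η^[n] h ∈ S
    rw [hfix h hh]; exact hh
  have hself : ∀ g ∈ levelSet S η n, η g ∈ levelSet S η n := by
    intro g hg
    show η^[n] (η g) ∈ S
    rw [← Function.iterate_succ_apply, Function.iterate_succ_apply',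
      hDDR2 _ hg]
    exact hg
  have hiter : ∀ k, ∀ g ∈ levelSet S η n, η^[k] g ∈ levelSet S η n := by
    intro k
    induction k with
    | zero => intro g hg; simpa using hg
    | succ m ih =>
      intro g hg
      rw [Function.iterate_succ_apply']
      exact hself _ (ih g hg)
  have hedge : ∀ k a b, GE a b → GE (η^[k] a) (η^[k] b) := by
    intro k
    induction k with
    | zero => intro a b h; simpa using h
    | succ m ih =>
      intro a b h
      rw [Function.iterate_succ_apply', Function.iterate_succ_apply']
      exact hηmap _ _ (ih a b h)
  refine ⟨hsub, hself, hfix, ?_⟩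
  have chain : ∀ m, Relation.ReflTransGen (LevelHtpyStep GE (levelSet S η n))
      (fun g => η^[m] g) id := by
    intro m
    induction m with
    | zero => exact Relation.ReflTransGen.refl
    | succ m ih =>
      refine Relation.ReflTransGen.head ?_ ih
      refine ⟨fun g hg => hiter (m+1) g hg, fun g hg => hiter m g hg,
        fun a _ b _ h => hedge (m+1) a b h, fun a _ b _ h => hedge m a b h,
        fun g hg => ?_⟩
      left
      show GE (η^[m+1] g) (η^[m] g)
      rw [Function.iterate_succ_apply']
      exact hDDR1 _
  exact chain n
end
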